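/- Let a, b ∈ (2ℕ)^q be vectors with even entries and let n ≥ q + 1, n ≥ 2. Then the basic extension formula holds: Φ_n applied to the two-row array with top row (a_1, …, a_q, 2) and bottom row (b_1, …, b_q, 0) equals (1/(n−q)) · [ (Σ_i a_i + n − 1) Φ_n(a; b) − Σ_{s=1}^q (a_s + 1) Φ_n(a^{(s)}; b) ], where a^{(s)} = (a_1, …, a_{s−1}, a_s + 2, a_{s+1}, …, a_q). -/

import Mathlib

open MeasureTheory Matrix

noncomputable section

/-- The double factorial convention of the paper: `m!! = (m-1)(m-3)(m-5)⋯`,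
the product ending at `1` or `2` (empty product being `1`), i.e. the standard
double factorial of `m - 1`. -/
def df (m : ℕ) : ℕ := Nat.doubleFactorial (m - 1)

/-- The Borel σ-algebra on the orthogonal group `O_n`. -/
instance (n : ℕ) : MeasurableSpace (Matrix.orthogonalGroup (Fin n) ℝ) := borel _

instance (n : ℕ) : BorelSpace (Matrix.orthogonalGroup (Fin n) ℝ) := ⟨rfl⟩

/-- The `(i,j)` entry of an orthogonal matrix (out-of-range indices give `0`;
in all statements below the indices are in range). -/
def entry {n : ℕ} (u : Matrix.orthogonalGroup (Fin n) ℝ) (i j : ℕ) : ℝ :=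
  if h : i < n ∧ j < n then (u : Matrix (Fin n) (Fin n) ℝ) ⟨i, h.1⟩ ⟨j, h.2⟩ else 0

/-- The rectangular integral `I_n(a) = ∫_{O_n} ∏_{i,j} u_{ij}^{a_{ij}} du`. -/
def In (n : ℕ) {p q : ℕ} (μ : Measure (Matrix.orthogonalGroup (Fin n) ℝ))
    (a : Matrix (Fin p) (Fin q) ℕ) : ℝ :=
  ∫ u, ∏ i : Fin p, ∏ j : Fin q, entry u i j ^ a i j ∂μ

/-- The two-row integral `I_n(a;b) = ∫_{O_n} ∏_j u_{1j}^{a_j} u_{2j}^{b_j} du`. -/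
def twoRowI (n : ℕ) {q : ℕ} (μ : Measure (Matrix.orthogonalGroup (Fin n) ℝ))
    (a b : Fin q → ℕ) : ℝ :=
  ∫ u, ∏ j : Fin q, entry u 0 j ^ a j * entry u 1 j ^ b j ∂μ

/-- The normalized two-row quantity
`Φ_n(a;b) = (Σa+n-2)!!(Σb+n-2)!! / (((n-2)!!)² ∏ a_i!! ∏ b_i!!) · I_n(a;b)`. -/
def Phi (n : ℕ) {q : ℕ} (μ : Measure (Matrix.orthogonalGroup (Fin n) ℝ))
    (a b : Fin q → ℕ) : ℝ :=
  ((df (∑ i, a i + n - 2) : ℝ) * (df (∑ i, b i + n - 2) : ℝ)) /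
    ((df (n - 2) : ℝ) ^ 2 * (∏ i, (df (a i) : ℝ)) * ∏ i, (df (b i) : ℝ)) *
    twoRowI n μ a b

/-- The pair of rows `E(r,s,t)`: top row `(1^{2r}, 2^s, 0^t)`. -/
def Etop (r s t : ℕ) : Fin (2 * r + s + t) → ℕ :=
  fun j => if (j : ℕ) < 2 * r then 1 else if (j : ℕ) < 2 * r + s then 2 else 0

/-- The pair of rows `E(r,s,t)`: bottom row `(1^{2r}, 0^s, 2^t)`. -/
def Ebot (r s t : ℕ) : Fin (2 * r + s + t) → ℕ :=
  fun j => if (j : ℕ) < 2 * r then 1 else if (j : ℕ) < 2 * r + s then 0 else 2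

/-!
The first row of an orthogonal matrix is a unit vector, so inserting `∑ₖ u₁ₖ² = 1` into the
integrand splits `I_n(a;b)` into `n` integrals. For `k ≤ q` the `k`-th one is `I_n(a⁽ᵏ⁾;b)`.
The remaining `n - q` ones all equal `I_n((a,2);(b,0))`: right multiplication by the permutation
matrix swapping two columns beyond `q` preserves the Haar probability measure and fixes the rest
of the integrand. Multiplying by the normalising constants, which only requires
`(m+2)!! = (m+1) m!!`, gives the formula for `Φ_n`.
-/

namespace Matrix

variable {ι : Type*} [Fintype ι] [DecidableEq ι]

instance : CompactSpace (orthogonalGroup ι ℝ) := by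
  refine isCompact_iff_compactSpace.mp <| (isCompact_univ_pi fun _ => isCompact_univ_pi fun _ =>
    isCompact_Icc (a := (-1 : ℝ)) (b := 1)).of_isClosed_subset
      (isClosed_unitary (R := Matrix ι ι ℝ)) ?_
  intro M hM i _ j _
  simpa [abs_le] using entry_norm_bound_of_unitary hM i j

theorem permMatrix_mem_orthogonalGroup {R : Type*} [CommRing R] (σ : Equiv.Perm ι) :
    σ.permMatrix R ∈ orthogonalGroup ι R := by
  rw [mem_orthogonalGroup_iff, transpose_permMatrix, ← permMatrix_mul, inv_mul_cancel,
    permMatrix_one]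

def orthogonalGroup.ofPerm (σ : Equiv.Perm ι) : orthogonalGroup ι ℝ :=
  ⟨σ.permMatrix ℝ, permMatrix_mem_orthogonalGroup σ⟩

theorem orthogonalGroup.coe_mul_ofPerm (u : orthogonalGroup ι ℝ) (σ : Equiv.Perm ι) :
    ((u * ofPerm σ : orthogonalGroup ι ℝ) : Matrix ι ι ℝ) =
      (u : Matrix ι ι ℝ).submatrix id σ.symm :=
  PEquiv.mul_toMatrix_toPEquiv _ σ

end Matrix

theorem MeasureTheory.Measure.isMulRightInvariant_of_isProbabilityMeasure {G : Type*} [Group G]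
    [TopologicalSpace G] [IsTopologicalGroup G] [LocallyCompactSpace G] [MeasurableSpace G]
    [BorelSpace G] (μ : Measure G) [μ.IsHaarMeasure] [IsProbabilityMeasure μ] :
    μ.IsMulRightInvariant where
  map_mul_right_eq_self g := by
    have := isProbabilityMeasure_map (μ := μ) (measurable_mul_const g).aemeasurable
    exact isHaarMeasure_eq_of_isProbabilityMeasure _ μ

section Entries

variable {n : ℕ}

theorem entry_of_lt (u : orthogonalGroup (Fin n) ℝ) {i j : ℕ} (hi : i < n) (hj : j < n) :
    entry u i j = (u : Matrix (Fin n) (Fin n) ℝ) ⟨i, hi⟩ ⟨j, hj⟩ :=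
  dif_pos ⟨hi, hj⟩

@[fun_prop]
theorem continuous_entry (i j : ℕ) :
    Continuous fun u : orthogonalGroup (Fin n) ℝ => entry u i j := by
  unfold entry
  split_ifs
  · exact continuous_subtype_val.matrix_elem _ _
  · exact continuous_const

theorem sum_range_entry_sq (u : orthogonalGroup (Fin n) ℝ) {i : ℕ} (hi : i < n) :
    ∑ k ∈ Finset.range n, entry u i k ^ 2 = 1 := by
  have hrow := congrFun (congrFun ((mem_orthogonalGroup_iff _ _).1 u.2) ⟨i, hi⟩) ⟨i, hi⟩
  rw [mul_apply, one_apply_eq] at hrow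
  rw [← hrow, Finset.sum_range]
  exact Finset.sum_congr rfl fun k _ => by rw [entry_of_lt u hi k.2, sq, transpose_apply]

theorem entry_mul_ofPerm (u : orthogonalGroup (Fin n) ℝ) (σ : Equiv.Perm (Fin n)) (i : ℕ)
    (j : Fin n) : entry (u * orthogonalGroup.ofPerm σ) i j = entry u i (σ.symm j) := by
  by_cases hi : i < n
  · rw [entry_of_lt _ hi j.2, entry_of_lt _ hi (σ.symm j).2, orthogonalGroup.coe_mul_ofPerm]
    rfl
  · simp [entry, hi]

theorem entry_mul_ofPerm_swap_of_lt (u : orthogonalGroup (Fin n) ℝ) {k l : Fin n} {j : ℕ}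
    (hk : j < k) (hl : j < l) (i : ℕ) :
    entry (u * orthogonalGroup.ofPerm (Equiv.swap k l)) i j = entry u i j := by
  have hj : j < n := hk.trans k.2
  have := entry_mul_ofPerm u (Equiv.swap k l) i ⟨j, hj⟩
  rwa [Equiv.symm_swap, Equiv.swap_apply_of_ne_of_ne (Fin.ne_of_lt hk) (Fin.ne_of_lt hl)] at this

end Entries

@[to_additive]
theorem Fintype.prod_apply_update {ι M : Type*} [Fintype ι] [DecidableEq ι] [CommMonoid M]
    (f : ι → ℕ → M) (a : ι → ℕ) (s : ι) (v : ℕ) :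
    ∏ j, f j (Function.update a s v j) = f s v * ∏ j ∈ {s}ᶜ, f j (a j) := by
  rw [Fintype.prod_eq_mul_prod_compl s, Function.update_self]
  exact congrArg _ <| Finset.prod_congr rfl fun j hj => by
    rw [Function.update_of_ne (by simpa using hj)]

section Integrals

open Matrix.orthogonalGroup

variable {n : ℕ} (μ : Measure (orthogonalGroup (Fin n) ℝ))

theorem integral_eq_sum_integral_entry_sq_mul [IsFiniteMeasure μ]
    {g : orthogonalGroup (Fin n) ℝ → ℝ} (hg : Continuous g) {i : ℕ} (hi : i < n) :
    ∫ u, g u ∂μ = ∑ k ∈ Finset.range n, ∫ u, entry u i k ^ 2 * g u ∂μ := by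
  rw [← integral_finsetSum _ fun k _ =>
    (by fun_prop : Continuous fun u => entry u i k ^ 2 * g u).integrable_of_hasCompactSupport
      (.of_compactSpace _)]
  simp_rw [← Finset.sum_mul, sum_range_entry_sq _ hi, one_mul]

theorem integral_entry_sq_mul_eq_of_swap [μ.IsHaarMeasure] [IsProbabilityMeasure μ]
    {g : orthogonalGroup (Fin n) ℝ → ℝ} (k l : Fin n)
    (hg : ∀ u, g (u * ofPerm (Equiv.swap k l)) = g u) (i : ℕ) :
    ∫ u, entry u i k ^ 2 * g u ∂μ = ∫ u, entry u i l ^ 2 * g u ∂μ := by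
  have := μ.isMulRightInvariant_of_isProbabilityMeasure
  rw [← integral_mul_right_eq_self (fun u => entry u i l ^ 2 * g u) (ofPerm (Equiv.swap k l))]
  simp only [hg, entry_mul_ofPerm, Equiv.symm_swap, Equiv.swap_apply_right]

theorem twoRowI_eq_sum_update_add_snoc [μ.IsHaarMeasure] [IsProbabilityMeasure μ] {q : ℕ}
    (a b : Fin q → ℕ) (hq : q + 1 ≤ n) :
    twoRowI n μ a b = ∑ s, twoRowI n μ (Function.update a s (a s + 2)) b
      + ((n : ℝ) - q) * twoRowI n μ (Fin.snoc a 2) (Fin.snoc b 0) := by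
  set g : orthogonalGroup (Fin n) ℝ → ℝ :=
    fun u => ∏ j : Fin q, entry u 0 j ^ a j * entry u 1 j ^ b j
  set c : ℕ → ℝ := fun k => ∫ u, entry u 0 k ^ 2 * g u ∂μ
  have hsplit : twoRowI n μ a b = ∑ k ∈ Finset.range n, c k :=
    integral_eq_sum_integral_entry_sq_mul μ (by fun_prop) (by omega)
  have hlow (s : Fin q) : c s = twoRowI n μ (Function.update a s (a s + 2)) b := by
    refine integral_congr_ae (ae_of_all _ fun u => ?_)
    have hupd := Fintype.prod_apply_update (fun (j : Fin q) e => entry u 0 j ^ e) a s (a s + 2)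
    have hsplit_s := Fintype.prod_eq_mul_prod_compl s fun j => entry u 0 j ^ a j
    simp only [g, Finset.prod_mul_distrib, hupd, hsplit_s]
    ring
  have hhigh (k : ℕ) (hk : k ∈ Finset.Ico q n) : c k = c q := by
    obtain ⟨hqk, hkn⟩ := Finset.mem_Ico.1 hk
    refine integral_entry_sq_mul_eq_of_swap μ ⟨k, hkn⟩ ⟨q, by omega⟩ (fun u => ?_) 0
    refine Finset.prod_congr rfl fun j _ => ?_
    rw [entry_mul_ofPerm_swap_of_lt u (show (j : ℕ) < k by omega) (show (j : ℕ) < q by omega),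
      entry_mul_ofPerm_swap_of_lt u (show (j : ℕ) < k by omega) (show (j : ℕ) < q by omega)]
  have hlast : twoRowI n μ (Fin.snoc a 2) (Fin.snoc b 0) = c q := by
    refine integral_congr_ae (ae_of_all _ fun u => ?_)
    simp [Fin.prod_univ_castSucc, g, mul_comm]
  rw [hsplit, ← Finset.sum_range_add_sum_Ico _ (by omega : q ≤ n), Finset.sum_range,
    Finset.sum_congr rfl hhigh, Finset.sum_const, Nat.card_Ico, nsmul_eq_mul,
    Nat.cast_sub (by omega : q ≤ n), hlast]
  simp [hlow]

end Integrals

section Normalization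

theorem df_pos (m : ℕ) : 0 < df m :=
  Nat.doubleFactorial_pos _

theorem df_add_two (m : ℕ) : df (m + 2) = (m + 1) * df m := by
  cases m with
  | zero => rfl
  | succ k => exact Nat.doubleFactorial_add_two k

def phiCoeff (n : ℕ) {q : ℕ} (a b : Fin q → ℕ) : ℝ :=
  ((df (∑ i, a i + n - 2) : ℝ) * (df (∑ i, b i + n - 2) : ℝ)) /
    ((df (n - 2) : ℝ) ^ 2 * (∏ i, (df (a i) : ℝ)) * ∏ i, (df (b i) : ℝ))

variable {n q : ℕ}

theorem Phi_eq_phiCoeff_mul (μ : Measure (orthogonalGroup (Fin n) ℝ)) (a b : Fin q → ℕ) :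
    Phi n μ a b = phiCoeff n a b * twoRowI n μ a b :=
  rfl

theorem cast_df_add_two_add_sub_two (hn : 2 ≤ n) (m : ℕ) :
    (df (m + 2 + n - 2) : ℝ) = ((m : ℝ) + n - 1) * df (m + n - 2) := by
  rw [show m + 2 + n - 2 = m + n - 2 + 2 by omega, df_add_two, Nat.cast_mul,
    Nat.cast_add_one, Nat.cast_sub (by omega), Nat.cast_add]
  ring

theorem phiCoeff_snoc (hn : 2 ≤ n) (a b : Fin q → ℕ) :
    phiCoeff n (Fin.snoc a 2) (Fin.snoc b 0) =
      (((∑ i, a i : ℕ) : ℝ) + n - 1) * phiCoeff n a b := by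
  simp only [phiCoeff, Fin.sum_univ_castSucc, Fin.prod_univ_castSucc, Fin.snoc_castSucc,
    Fin.snoc_last, add_zero]
  rw [cast_df_add_two_add_sub_two hn]
  simp [df, mul_div_assoc, mul_assoc]

theorem mul_phiCoeff_update (hn : 2 ≤ n) (a b : Fin q → ℕ) (s : Fin q) :
    ((a s : ℝ) + 1) * phiCoeff n (Function.update a s (a s + 2)) b =
      (((∑ i, a i : ℕ) : ℝ) + n - 1) * phiCoeff n a b := by
  have hsum : ∑ i, Function.update a s (a s + 2) i = ∑ i, a i + 2 := by
    rw [Fintype.sum_apply_update (fun _ e => e), Fintype.sum_eq_add_sum_compl s]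
    ring
  have hprod : ∏ i, (df (Function.update a s (a s + 2) i) : ℝ) =
      ((a s : ℝ) + 1) * ∏ i, (df (a i) : ℝ) := by
    rw [Fintype.prod_apply_update (fun _ e => (df e : ℝ)), Fintype.prod_eq_mul_prod_compl s,
      df_add_two]
    push_cast
    ring
  have hdf (m : ℕ) : (df m : ℝ) ≠ 0 := by exact_mod_cast (df_pos m).ne'
  have hprod_ne (c : Fin q → ℕ) : ∏ i, (df (c i) : ℝ) ≠ 0 :=
    Finset.prod_ne_zero_iff.2 fun i _ => hdf _
  rw [phiCoeff, phiCoeff, hsum, hprod, cast_df_add_two_add_sub_two hn]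
  field_simp [hdf, hprod_ne]

end Normalization

theorem statement7_general (q n : ℕ) (a b : Fin q → ℕ)
    (hn : 2 ≤ n) (hq : q + 1 ≤ n)
    (μ : Measure (Matrix.orthogonalGroup (Fin n) ℝ))
    [μ.IsHaarMeasure] [IsProbabilityMeasure μ] :
    Phi n μ (Fin.snoc a 2) (Fin.snoc b 0) =
      1 / ((n : ℝ) - (q : ℝ)) *
        ((((∑ i, a i : ℕ) : ℝ) + (n : ℝ) - 1) * Phi n μ a b -
          ∑ s : Fin q, ((a s : ℝ) + 1) * Phi n μ (Function.update a s (a s + 2)) b) := by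
  have hnq : (n : ℝ) - q ≠ 0 := sub_ne_zero.2 (by exact_mod_cast (by omega : n ≠ q))
  have hupdate : ∑ s : Fin q, ((a s : ℝ) + 1) * Phi n μ (Function.update a s (a s + 2)) b =
      (((∑ i, a i : ℕ) : ℝ) + n - 1) * phiCoeff n a b *
        ∑ s, twoRowI n μ (Function.update a s (a s + 2)) b := by
    rw [Finset.mul_sum]
    refine Finset.sum_congr rfl fun s _ => ?_
    rw [Phi_eq_phiCoeff_mul, ← mul_assoc, mul_phiCoeff_update hn]
  rw [hupdate, Phi_eq_phiCoeff_mul, Phi_eq_phiCoeff_mul, phiCoeff_snoc hn,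
    twoRowI_eq_sum_update_add_snoc μ a b hq]
  field_simp
  ring

/-- the basic extension formula. -/
theorem statement7 (q n : ℕ) (a b : Fin q → ℕ)
    (ha : ∀ i, Even (a i)) (hb : ∀ i, Even (b i))
    (hn : 2 ≤ n) (hq : q + 1 ≤ n)
    (μ : Measure (Matrix.orthogonalGroup (Fin n) ℝ))
    [μ.IsHaarMeasure] [IsProbabilityMeasure μ] :
    Phi n μ (Fin.snoc a 2) (Fin.snoc b 0) =
      1 / ((n : ℝ) - (q : ℝ)) *
        ((((∑ i, a i : ℕ) : ℝ) + (n : ℝ) - 1) * Phi n μ a b -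
          ∑ s : Fin q, ((a s : ℝ) + 1) * Phi n μ (Function.update a s (a s + 2)) b) :=
  statement7_general q n a b hn hq μ
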